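/- arXiv:2602.22271 — 4 statements merged into one kernel-verified Lean document; each statement's English description precedes it below -/
import Mathlib

section
/- For every t with 2 ≤ t ≤ L and every x ∈ ℝ^L, the map u ↦ u − Σ_{s<t} [exp(a·u·x_s)/Σ_{r<t} exp(a·u·x_r)]·x_s (that is, e_t viewed as a function of its t-th coordinate with x_1, …, x_{t−1} held fixed) is differentiable at u = x_t, and its derivative there equals 1 − a·Var_t(x). -/
/- Scalar strict-causal attention context:
   α_{ts}(x) = exp(a x_t x_s) / Σ_{r<t} exp(a x_t x_r) for s < t,
   μ_t(x) = Σ_{s<t} α_{ts}(x) x_s  (μ = 0 at the first position, as the sum is empty),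
   Var_t(x) = Σ_{s<t} α_{ts}(x) (x_s - μ_t(x))²,
   e_t(x) = x_t - μ_t(x).
   Positions are 0-indexed via `Fin L`, so "2 ≤ t ≤ L" becomes `1 ≤ (t : ℕ)`. -/

noncomputable section

def attnMu (L : ℕ) (a : ℝ) (x : Fin L → ℝ) (t : Fin L) : ℝ :=
  ∑ s ∈ Finset.Iio t,
    (Real.exp (a * x t * x s) / ∑ r ∈ Finset.Iio t, Real.exp (a * x t * x r)) * x s

def attnVar (L : ℕ) (a : ℝ) (x : Fin L → ℝ) (t : Fin L) : ℝ :=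
  ∑ s ∈ Finset.Iio t,
    (Real.exp (a * x t * x s) / ∑ r ∈ Finset.Iio t, Real.exp (a * x t * x r)) *
      (x s - attnMu L a x t) ^ 2

/-! The context mean is a quotient `N(u) / S(u)` of the exponential sums
`S(u) = ∑ exp(a u x_s)` and `N(u) = ∑ exp(a u x_s) x_s`, whose derivatives are `a N(u)` and
`a ∑ exp(a u x_s) x_s²`. The quotient rule therefore gives the derivative `a (E[x²] - E[x]²)`,
the variance under the attention weights. -/

open Finset

section WeightedMean

variable {ι : Type*} (s : Finset ι)

def weightedMean (w x : ι → ℝ) : ℝ :=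
  (∑ i ∈ s, w i * x i) / ∑ i ∈ s, w i

theorem sum_div_mul_eq_weightedMean (w x : ι → ℝ) :
    ∑ i ∈ s, (w i / ∑ j ∈ s, w j) * x i = weightedMean s w x := by
  simp only [weightedMean, div_mul_eq_mul_div, ← sum_div]

theorem sum_div_mul_sub_weightedMean_sq (w x : ι → ℝ) :
    ∑ i ∈ s, (w i / ∑ j ∈ s, w j) * (x i - weightedMean s w x) ^ 2 =
      weightedMean s w (fun i => x i ^ 2) - weightedMean s w x ^ 2 := by
  by_cases hW : ∑ i ∈ s, w i = 0
  · simp [weightedMean, hW]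
  set μ := weightedMean s w x
  calc ∑ i ∈ s, (w i / ∑ j ∈ s, w j) * (x i - μ) ^ 2
      = ∑ i ∈ s, (w i / ∑ j ∈ s, w j) * x i ^ 2 - 2 * μ * ∑ i ∈ s, (w i / ∑ j ∈ s, w j) * x i +
          μ ^ 2 * ∑ i ∈ s, (w i / ∑ j ∈ s, w j) := by
        rw [mul_sum, mul_sum, ← sum_sub_distrib, ← sum_add_distrib]
        exact sum_congr rfl fun i _ => by ring
    _ = weightedMean s w (fun i => x i ^ 2) - μ ^ 2 := by
        rw [sum_div_mul_eq_weightedMean, sum_div_mul_eq_weightedMean, ← sum_div, div_self hW]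
        ring

variable (a : ℝ) (c : ι → ℝ)

theorem hasDerivAt_sum_exp_mul_mul (v : ι → ℝ) (u : ℝ) :
    HasDerivAt (fun u => ∑ i ∈ s, Real.exp (a * u * c i) * v i)
      (a * ∑ i ∈ s, Real.exp (a * u * c i) * (c i * v i)) u := by
  rw [mul_sum]
  refine HasDerivAt.fun_sum fun i _ => ?_
  have hlin : HasDerivAt (fun u => a * u * c i) (a * c i) u := by
    simpa using ((hasDerivAt_id u).const_mul a).mul_const (c i)
  exact (hlin.exp.mul_const (v i)).congr_deriv (by ring)

theorem hasDerivAt_sum_exp_mul (u : ℝ) :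
    HasDerivAt (fun u => ∑ i ∈ s, Real.exp (a * u * c i))
      (a * ∑ i ∈ s, Real.exp (a * u * c i) * c i) u := by
  simpa using hasDerivAt_sum_exp_mul_mul s a c (fun _ => 1) u

theorem hasDerivAt_weightedMean_exp (hs : s.Nonempty) (v : ι → ℝ) (u : ℝ) :
    HasDerivAt (fun u => weightedMean s (fun i => Real.exp (a * u * c i)) v)
      (a * (weightedMean s (fun i => Real.exp (a * u * c i)) (fun i => c i * v i) -
        weightedMean s (fun i => Real.exp (a * u * c i)) c *
          weightedMean s (fun i => Real.exp (a * u * c i)) v)) u := by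
  have hW : ∑ i ∈ s, Real.exp (a * u * c i) ≠ 0 :=
    (sum_pos (fun i _ => Real.exp_pos _) hs).ne'
  unfold weightedMean
  exact ((hasDerivAt_sum_exp_mul_mul s a c v u).fun_div (hasDerivAt_sum_exp_mul s a c u)
    hW).congr_deriv (by field_simp)

end WeightedMean

section Attention

variable (L : ℕ) (a : ℝ) (x : Fin L → ℝ) (t : Fin L)

theorem attnMu_eq_weightedMean :
    attnMu L a x t = weightedMean (Iio t) (fun s => Real.exp (a * x t * x s)) x :=
  sum_div_mul_eq_weightedMean _ _ _

theorem attnVar_eq_weightedMean_sq_sub :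
    attnVar L a x t = weightedMean (Iio t) (fun s => Real.exp (a * x t * x s)) (fun s => x s ^ 2) -
      weightedMean (Iio t) (fun s => Real.exp (a * x t * x s)) x ^ 2 := by
  rw [attnVar, attnMu_eq_weightedMean]
  exact sum_div_mul_sub_weightedMean_sq _ _ _

end Attention

theorem stmt0_general (L : ℕ) (a : ℝ) (x : Fin L → ℝ) (t : Fin L)
    (ht : 1 ≤ (t : ℕ)) :
    HasDerivAt
      (fun u : ℝ => u - ∑ s ∈ Finset.Iio t,
        (Real.exp (a * u * x s) / ∑ r ∈ Finset.Iio t, Real.exp (a * u * x r)) * x s)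
      (1 - a * attnVar L a x t) (x t) := by
  have hne : (Iio t).Nonempty := ⟨⟨0, t.pos⟩, mem_Iio.mpr ht⟩
  simp only [sum_div_mul_eq_weightedMean, attnVar_eq_weightedMean_sq_sub]
  exact ((hasDerivAt_id (x t)).sub (hasDerivAt_weightedMean_exp _ a x hne x (x t))).congr_deriv
    (by simp only [sq])

/-- Scalar diagonal derivative: for 2 ≤ t ≤ L (i.e. `1 ≤ (t : ℕ)` with 0-indexing),
the map `u ↦ u − Σ_{s<t} [exp(a u x_s)/Σ_{r<t} exp(a u x_r)]·x_s` is differentiable at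
`u = x_t` with derivative `1 − a·Var_t(x)`. -/
theorem stmt0 (L : ℕ) (hL : 1 ≤ L) (a : ℝ) (x : Fin L → ℝ) (t : Fin L)
    (ht : 1 ≤ (t : ℕ)) :
    HasDerivAt
      (fun u : ℝ => u - ∑ s ∈ Finset.Iio t,
        (Real.exp (a * u * x s) / ∑ r ∈ Finset.Iio t, Real.exp (a * u * x r)) * x s)
      (1 - a * attnVar L a x t) (x t) :=
  stmt0_general L a x t ht

end
end

section
/- For every t with 2 ≤ t ≤ L and every x ∈ (ℝ^d)^L, the map u ↦ u − Σ_{s<t} [exp(uᵀ Aᵀ x_s)/Σ_{r<t} exp(uᵀ Aᵀ x_r)]·x_s (that is, e_t viewed as a function of its t-th block coordinate with x_1, …, x_{t−1} held fixed) is Fréchet differentiable at u = x_t, and its derivative there is the linear map ℝ^d → ℝ^d given by the matrix I_d − Σ_t(x)·A. -/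
/-!
Write the attention weights as a softmax `w_s(u) = exp (ℓ_s u - log ∑_r exp (ℓ_r u))` of the
linear logits `ℓ_s u = uᵀ Aᵀ x_s`. The chain rule gives `dw_s = w_s (dℓ_s - ∑_r w_r dℓ_r)`, so
the derivative of the context mean in a direction `v` is `∑_s w_s (ℓ_s v - ℓ̄ v) x_s` with
`ℓ̄ = ∑_r w_r ℓ_r`, the `w`-covariance of the logits with the keys. Centring the keys as well
changes nothing, because the coefficients `w_s (ℓ_s v - ℓ̄ v)` sum to zero; since
`ℓ_s v = x_sᵀ (A v)`, the result is `Σ_t (A v)`.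
-/

noncomputable section

open Matrix

/- Positions are 0-indexed (`Fin L`), so the paper's `2 ≤ t` reads `1 ≤ (t : ℕ)`. -/

def vMu (d L : ℕ) (A : Matrix (Fin d) (Fin d) ℝ) (x : Fin L → Fin d → ℝ) (t : Fin L) :
    Fin d → ℝ :=
  ∑ s ∈ Finset.Iio t,
    (Real.exp (x t ⬝ᵥ (Aᵀ *ᵥ x s)) /
      ∑ r ∈ Finset.Iio t, Real.exp (x t ⬝ᵥ (Aᵀ *ᵥ x r))) • x s

def vSigma (d L : ℕ) (A : Matrix (Fin d) (Fin d) ℝ) (x : Fin L → Fin d → ℝ) (t : Fin L) :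
    Matrix (Fin d) (Fin d) ℝ :=
  ∑ s ∈ Finset.Iio t,
    (Real.exp (x t ⬝ᵥ (Aᵀ *ᵥ x s)) /
      ∑ r ∈ Finset.Iio t, Real.exp (x t ⬝ᵥ (Aᵀ *ᵥ x r))) •
      Matrix.vecMulVec (x s - vMu d L A x t) (x s - vMu d L A x t)

open Finset

section Softmax

variable {ι : Type*} (s : Finset ι)

def softmax (z : ι → ℝ) (i : ι) : ℝ :=
  Real.exp (z i) / ∑ r ∈ s, Real.exp (z r)

variable {s}

lemma sum_exp_pos (hs : s.Nonempty) (z : ι → ℝ) : 0 < ∑ r ∈ s, Real.exp (z r) :=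
  sum_pos (fun _ _ => Real.exp_pos _) hs

lemma sum_softmax_eq_one (hs : s.Nonempty) (z : ι → ℝ) : ∑ i ∈ s, softmax s z i = 1 := by
  simp only [softmax]
  rw [← sum_div, div_self (sum_exp_pos hs z).ne']

lemma softmax_eq_exp_sub_log (hs : s.Nonempty) (z : ι → ℝ) (i : ι) :
    softmax s z i = Real.exp (z i - Real.log (∑ r ∈ s, Real.exp (z r))) := by
  rw [Real.exp_sub, Real.exp_log (sum_exp_pos hs z), softmax]

variable {E : Type*} [NormedAddCommGroup E] [NormedSpace ℝ E]

lemma hasFDerivAt_log_sum_exp {f : ι → E → ℝ} {f' : ι → E →L[ℝ] ℝ} {u : E}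
    (hs : s.Nonempty) (hf : ∀ r ∈ s, HasFDerivAt (f r) (f' r) u) :
    HasFDerivAt (fun v => Real.log (∑ r ∈ s, Real.exp (f r v)))
      (∑ r ∈ s, softmax s (fun r => f r u) r • f' r) u := by
  convert (HasFDerivAt.fun_sum fun _ hr => (hf _ hr).exp).log (sum_exp_pos hs _).ne' using 1
  simp only [softmax, smul_sum, smul_smul, div_eq_inv_mul]

lemma hasFDerivAt_softmax {f : ι → E → ℝ} {f' : ι → E →L[ℝ] ℝ} {u : E}
    (hs : s.Nonempty) (hf : ∀ r, HasFDerivAt (f r) (f' r) u) (i : ι) :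
    HasFDerivAt (fun v => softmax s (fun r => f r v) i)
      (softmax s (fun r => f r u) i • (f' i - ∑ r ∈ s, softmax s (fun r => f r u) r • f' r)) u := by
  have hfun : (fun v => softmax s (fun r => f r v) i) =
      fun v => Real.exp (f i v - Real.log (∑ r ∈ s, Real.exp (f r v))) :=
    funext fun v => softmax_eq_exp_sub_log hs _ i
  rw [hfun, softmax_eq_exp_sub_log hs _ i]
  exact ((hf i).fun_sub (hasFDerivAt_log_sum_exp hs fun r _ => hf r)).exp

lemma hasFDerivAt_sum_softmax_smul {F : Type*} [NormedAddCommGroup F] [NormedSpace ℝ F]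
    {f : ι → E → ℝ} {f' : ι → E →L[ℝ] ℝ} {u : E} (hs : s.Nonempty)
    (hf : ∀ r, HasFDerivAt (f r) (f' r) u) (y : ι → F) :
    HasFDerivAt (fun v => ∑ i ∈ s, softmax s (fun r => f r v) i • y i)
      (∑ i ∈ s, (softmax s (fun r => f r u) i •
        (f' i - ∑ r ∈ s, softmax s (fun r => f r u) r • f' r)).smulRight (y i)) u :=
  HasFDerivAt.fun_sum fun i _ => (hasFDerivAt_softmax hs hf i).smul_const (y i)

end Softmax

lemma hasFDerivAt_dotProduct_const {n : Type*} [Fintype n] (a u : n → ℝ) :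
    HasFDerivAt (· ⬝ᵥ a)
      (LinearMap.toContinuousLinearMap
        ((dotProductBilin ℝ ℝ : (n → ℝ) →ₗ[ℝ] (n → ℝ) →ₗ[ℝ] ℝ).flip a)) u :=
  (LinearMap.toContinuousLinearMap
    ((dotProductBilin ℝ ℝ : (n → ℝ) →ₗ[ℝ] (n → ℝ) →ₗ[ℝ] ℝ).flip a)).hasFDerivAt

lemma sum_centered_smul_sub_mean {ι R E : Type*} [CommRing R] [AddCommGroup E] [Module R E]
    (s : Finset ι) (w g : ι → R) (y : ι → E) (hw : ∑ i ∈ s, w i = 1) :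
    ∑ i ∈ s, (w i * (g i - ∑ r ∈ s, w r * g r)) • (y i - ∑ r ∈ s, w r • y r) =
      ∑ i ∈ s, (w i * (g i - ∑ r ∈ s, w r * g r)) • y i := by
  have hc : ∑ i ∈ s, w i * (g i - ∑ r ∈ s, w r * g r) = 0 := by
    simp only [mul_sub, sum_sub_distrib, ← sum_mul, hw, one_mul, sub_self]
  simp only [smul_sub, sum_sub_distrib, ← sum_smul, hc, zero_smul, sub_zero]

lemma vSigma_mulVec (d L : ℕ) (A : Matrix (Fin d) (Fin d) ℝ) (x : Fin L → Fin d → ℝ) (t : Fin L)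
    (hI : (Iio t).Nonempty) (q : Fin d → ℝ) :
    vSigma d L A x t *ᵥ q =
      ∑ s ∈ Iio t, (softmax (Iio t) (fun r => x t ⬝ᵥ (Aᵀ *ᵥ x r)) s *
        (x s ⬝ᵥ q - ∑ r ∈ Iio t,
          softmax (Iio t) (fun r => x t ⬝ᵥ (Aᵀ *ᵥ x r)) r * (x r ⬝ᵥ q))) • x s := by
  set w := softmax (Iio t) (fun r => x t ⬝ᵥ (Aᵀ *ᵥ x r))
  have hμ : vMu d L A x t = ∑ r ∈ Iio t, w r • x r := rfl
  have hμq : vMu d L A x t ⬝ᵥ q = ∑ r ∈ Iio t, w r * (x r ⬝ᵥ q) := by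
    simp only [hμ, sum_dotProduct, smul_dotProduct, smul_eq_mul]
  rw [← sum_centered_smul_sub_mean _ w _ x (sum_softmax_eq_one hI _), ← hμ, vSigma, sum_mulVec]
  refine sum_congr rfl fun s _ => ?_
  rw [smul_mulVec, vecMulVec_mulVec, op_smul_eq_smul, smul_smul, sub_dotProduct, hμq]
  rfl

theorem stmt1_general (d L : ℕ) (A : Matrix (Fin d) (Fin d) ℝ)
    (x : Fin L → Fin d → ℝ) (t : Fin L) (ht : 1 ≤ (t : ℕ)) :
    HasFDerivAt
      (fun u : Fin d → ℝ => u - ∑ s ∈ Finset.Iio t,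
        (Real.exp (u ⬝ᵥ (Aᵀ *ᵥ x s)) /
          ∑ r ∈ Finset.Iio t, Real.exp (u ⬝ᵥ (Aᵀ *ᵥ x r))) • x s)
      (LinearMap.toContinuousLinearMap
        (Matrix.mulVecLin ((1 : Matrix (Fin d) (Fin d) ℝ) - vSigma d L A x t * A)))
      (x t) := by
  have hI : (Iio t).Nonempty := ⟨⟨0, t.pos⟩, mem_Iio.2 ht⟩
  refine ((hasFDerivAt_id (x t)).sub (hasFDerivAt_sum_softmax_smul hI
    (fun r => hasFDerivAt_dotProduct_const (Aᵀ *ᵥ x r) (x t)) x)).congr_fderiv ?_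
  have hlogit (v : Fin d → ℝ) (r : Fin L) : v ⬝ᵥ (Aᵀ *ᵥ x r) = x r ⬝ᵥ (A *ᵥ v) := by
    rw [dotProduct_mulVec, vecMul_transpose, dotProduct_comm]
  refine ContinuousLinearMap.ext fun v => ?_
  simp [vSigma_mulVec d L A x t hI, hlogit]

/-- Diagonal Jacobian block: for 2 ≤ t ≤ L (0-indexed: `1 ≤ (t : ℕ)`), the map
`u ↦ u − Σ_{s<t} [exp(uᵀAᵀx_s)/Σ_{r<t} exp(uᵀAᵀx_r)]·x_s` is Fréchet differentiable at
`u = x_t` with derivative the linear map given by the matrix `I_d − Σ_t(x)·A`. -/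
theorem stmt1 (d L : ℕ) (hd : 1 ≤ d) (hL : 1 ≤ L) (A : Matrix (Fin d) (Fin d) ℝ)
    (x : Fin L → Fin d → ℝ) (t : Fin L) (ht : 1 ≤ (t : ℕ)) :
    HasFDerivAt
      (fun u : Fin d → ℝ => u - ∑ s ∈ Finset.Iio t,
        (Real.exp (u ⬝ᵥ (Aᵀ *ᵥ x s)) /
          ∑ r ∈ Finset.Iio t, Real.exp (u ⬝ᵥ (Aᵀ *ᵥ x r))) • x s)
      (LinearMap.toContinuousLinearMap
        (Matrix.mulVecLin ((1 : Matrix (Fin d) (Fin d) ℝ) - vSigma d L A x t * A)))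
      (x t) :=
  stmt1_general d L A x t ht

end
end

section
/- The scalar residual map E is differentiable on ℝ^L; its Jacobian matrix at x satisfies ∂e_t/∂x_s = 0 whenever s > t, and its determinant equals det DE(x) = ∏_{t=2}^L (1 − a·Var_t(x)) for every x ∈ ℝ^L (the t = 1 diagonal entry being 1). -/
/- Scalar strict-causal attention context (0-indexed positions via `Fin L`):
   μ_t(x) = Σ_{s<t} α_{ts}(x) x_s with α_{ts}(x) = exp(a x_t x_s)/Σ_{r<t} exp(a x_t x_r),
   Var_t(x) the attention-weighted variance, e_t(x) = x_t - μ_t(x),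
   E = residMap the residual map. -/

noncomputable section

def residMap (L : ℕ) (a : ℝ) (x : Fin L → ℝ) : Fin L → ℝ :=
  fun t => x t - attnMu L a x t

/- Since `e_t` depends only on `x_1, …, x_t`, the Jacobian of `E` is lower triangular and its
determinant is the product of the diagonal entries. As a function of `x_t` alone, `μ_t` is the mean
of the `x_s` (`s < t`) under the softmax distribution with inverse temperature `θ = a x_t`; the
derivative of such a mean in `θ` is the variance (the second derivative of the log-partition
function), so `∂e_t/∂x_t = 1 - a Var_t`. -/

open Finset Real Function

theorem Finset.sum_mul_sub_sq_of_sum_eq_one {ι : Type*} {S : Finset ι} {p y : ι → ℝ}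
    (hp : ∑ s ∈ S, p s = 1) :
    ∑ s ∈ S, p s * (y s - ∑ r ∈ S, p r * y r) ^ 2 =
      ∑ s ∈ S, p s * y s ^ 2 - (∑ s ∈ S, p s * y s) ^ 2 := by
  set m := ∑ r ∈ S, p r * y r
  calc ∑ s ∈ S, p s * (y s - m) ^ 2
      = ∑ s ∈ S, (p s * y s ^ 2 - 2 * m * (p s * y s) + m ^ 2 * p s) :=
        sum_congr rfl fun s _ => by ring
    _ = ∑ s ∈ S, p s * y s ^ 2 - 2 * m * m + m ^ 2 * ∑ s ∈ S, p s := by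
        rw [sum_add_distrib, sum_sub_distrib, ← mul_sum, ← mul_sum]
    _ = _ := by rw [hp]; ring

section Softmax

variable {ι : Type*} (S : Finset ι) (y : ι → ℝ)

def softmaxMean (θ : ℝ) : ℝ :=
  ∑ s ∈ S, (exp (θ * y s) / ∑ r ∈ S, exp (θ * y r)) * y s

def softmaxVar (θ : ℝ) : ℝ :=
  ∑ s ∈ S, (exp (θ * y s) / ∑ r ∈ S, exp (θ * y r)) * (y s - softmaxMean S y θ) ^ 2

variable {S y}

theorem softmaxMean_congr {y' : ι → ℝ} (h : ∀ s ∈ S, y s = y' s) :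
    softmaxMean S y = softmaxMean S y' := by
  ext θ
  have hZ : ∑ r ∈ S, exp (θ * y r) = ∑ r ∈ S, exp (θ * y' r) :=
    sum_congr rfl fun r hr => by rw [h r hr]
  rw [softmaxMean, softmaxMean, hZ]
  exact sum_congr rfl fun s hs => by rw [h s hs]

theorem softmaxVar_eq_div_sub_sq (θ : ℝ) (hS : S.Nonempty) :
    softmaxVar S y θ =
      (∑ s ∈ S, exp (θ * y s) * y s ^ 2) / ∑ s ∈ S, exp (θ * y s) -
        ((∑ s ∈ S, exp (θ * y s) * y s) / ∑ s ∈ S, exp (θ * y s)) ^ 2 := by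
  have hZ : ∑ s ∈ S, exp (θ * y s) ≠ 0 := (sum_pos (fun s _ => exp_pos _) hS).ne'
  rw [softmaxVar, softmaxMean, sum_mul_sub_sq_of_sum_eq_one (by rw [← sum_div, div_self hZ]),
    sum_div, sum_div]
  simp only [div_mul_eq_mul_div]

theorem hasDerivAt_softmaxMean (θ : ℝ) :
    HasDerivAt (softmaxMean S y) (softmaxVar S y θ) θ := by
  rcases S.eq_empty_or_nonempty with rfl | hS
  · simp only [softmaxMean, softmaxVar, sum_empty]
    exact hasDerivAt_const θ 0
  have hZ : ∀ θ, ∑ s ∈ S, exp (θ * y s) ≠ 0 := fun θ => (sum_pos (fun s _ => exp_pos _) hS).ne'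
  have hexp : ∀ s, HasDerivAt (fun θ => exp (θ * y s)) (exp (θ * y s) * y s) θ := fun s => by
    simpa using ((hasDerivAt_id θ).mul_const (y s)).exp
  have hZ' : HasDerivAt (fun θ => ∑ s ∈ S, exp (θ * y s)) (∑ s ∈ S, exp (θ * y s) * y s) θ :=
    HasDerivAt.fun_sum fun s _ => hexp s
  have hN' : HasDerivAt (fun θ => ∑ s ∈ S, exp (θ * y s) * y s)
      (∑ s ∈ S, exp (θ * y s) * y s ^ 2) θ := by
    simpa only [mul_assoc, ← sq] using HasDerivAt.fun_sum fun s _ => (hexp s).mul_const (y s)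
  have hmean : softmaxMean S y = fun θ =>
      (∑ s ∈ S, exp (θ * y s) * y s) / ∑ s ∈ S, exp (θ * y s) := by
    ext θ; rw [softmaxMean, sum_div]; simp only [div_mul_eq_mul_div]
  rw [hmean, softmaxVar_eq_div_sub_sq θ hS]
  refine (hN'.fun_div hZ' (hZ θ)).congr_deriv ?_
  field_simp

theorem Differentiable.softmaxMean {E : Type*} [NormedAddCommGroup E] [NormedSpace ℝ E]
    {f : E → ι → ℝ} {g : E → ℝ} (hf : ∀ s, Differentiable ℝ fun e => f e s)
    (hg : Differentiable ℝ g) :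
    Differentiable ℝ fun e => softmaxMean S (f e) (g e) := by
  rcases S.eq_empty_or_nonempty with rfl | hS
  · simp only [_root_.softmaxMean, sum_empty]
    exact differentiable_const 0
  have hZ : ∀ e, ∑ r ∈ S, Real.exp (g e * f e r) ≠ 0 :=
    fun e => (sum_pos (fun r _ => exp_pos _) hS).ne'
  have hexp : ∀ s, Differentiable ℝ fun e => Real.exp (g e * f e s) := fun s => by
    have := hf s; fun_prop
  have hZd : Differentiable ℝ fun e => ∑ r ∈ S, Real.exp (g e * f e r) :=
    Differentiable.fun_sum fun r _ => hexp r
  simp only [_root_.softmaxMean, div_eq_mul_inv]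
  exact Differentiable.fun_sum fun s _ => ((hexp s).mul (hZd.inv hZ)).mul (hf s)

end Softmax

theorem fderiv_apply_single {𝕜 ι κ : Type*} [NontriviallyNormedField 𝕜] [Fintype ι] [Fintype κ]
    [DecidableEq ι] {f : (ι → 𝕜) → κ → 𝕜} {x : ι → 𝕜} (hf : DifferentiableAt 𝕜 f x) (i : ι)
    (k : κ) : fderiv 𝕜 f x (Pi.single i 1) k = deriv (fun θ => f (update x i θ) k) (x i) := by
  have hline : HasDerivAt (fun θ => f (update x i θ)) (fderiv 𝕜 f x (Pi.single i 1)) (x i) := by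
    refine HasFDerivAt.comp_hasDerivAt (x i) ?_ (hasDerivAt_update x i (x i))
    rw [update_eq_self]
    exact hf.hasFDerivAt
  exact ((hasDerivAt_pi.1 hline) k).deriv.symm

section Attention

variable {L : ℕ} (a : ℝ) (x : Fin L → ℝ)

theorem attnMu_eq_softmaxMean (t : Fin L) : attnMu L a x t = softmaxMean (Iio t) x (a * x t) := rfl

theorem attnVar_eq_softmaxVar (t : Fin L) : attnVar L a x t = softmaxVar (Iio t) x (a * x t) := rfl

theorem attnVar_eq_zero_of_val_eq_zero {t : Fin L} (ht : (t : ℕ) = 0) : attnVar L a x t = 0 := by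
  have : Iio t = ∅ := by ext s; simp [Fin.lt_def, ht]
  simp [attnVar, this]

theorem differentiable_residMap : Differentiable ℝ (residMap L a) := by
  refine differentiable_pi.2 fun t => (differentiable_apply t).sub ?_
  simp only [attnMu_eq_softmaxMean]
  exact Differentiable.softmaxMean (fun s => differentiable_apply s)
    ((differentiable_apply t).const_mul a)

theorem residMap_update_of_lt {t s : Fin L} (hts : t < s) (θ : ℝ) :
    residMap L a (update x s θ) t = residMap L a x t := by
  have hx : ∀ r ∈ Iio t, update x s θ r = x r := fun r hr =>
    update_of_ne ((mem_Iio.1 hr).trans hts).ne _ _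
  simp only [residMap, attnMu_eq_softmaxMean, softmaxMean_congr hx, update_of_ne hts.ne]

theorem residMap_update_self (t : Fin L) (θ : ℝ) :
    residMap L a (update x t θ) t = θ - softmaxMean (Iio t) x (a * θ) := by
  have hx : ∀ r ∈ Iio t, update x t θ r = x r := fun r hr => update_of_ne (mem_Iio.1 hr).ne _ _
  simp only [residMap, attnMu_eq_softmaxMean, softmaxMean_congr hx, update_self]

theorem fderiv_residMap_single_of_lt {t s : Fin L} (hts : t < s) :
    fderiv ℝ (residMap L a) x (Pi.single s 1) t = 0 := by
  simp [fderiv_apply_single (differentiable_residMap a x) s t, residMap_update_of_lt a x hts]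

theorem fderiv_residMap_single_self (t : Fin L) :
    fderiv ℝ (residMap L a) x (Pi.single t 1) t = 1 - a * attnVar L a x t := by
  rw [fderiv_apply_single (differentiable_residMap a x) t t]
  simp only [residMap_update_self]
  have hμ : HasDerivAt (fun θ => softmaxMean (Iio t) x (a * θ))
      (softmaxVar (Iio t) x (a * x t) * a) (x t) :=
    (hasDerivAt_softmaxMean (a * x t)).comp (x t) (by simpa using (hasDerivAt_id (x t)).const_mul a)
  rw [((hasDerivAt_id' (x t)).fun_sub hμ).deriv, attnVar_eq_softmaxVar, mul_comm]

end Attention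

theorem stmt4_general (L : ℕ) (a : ℝ) :
    Differentiable ℝ (residMap L a) ∧
    ∀ x : Fin L → ℝ,
      (∀ t s : Fin L, t < s → fderiv ℝ (residMap L a) x (Pi.single s 1) t = 0) ∧
      (∀ t : Fin L, (t : ℕ) = 0 → fderiv ℝ (residMap L a) x (Pi.single t 1) t = 1) ∧
      (Matrix.of fun t s : Fin L => fderiv ℝ (residMap L a) x (Pi.single s 1) t).det =
        ∏ t ∈ Finset.univ.filter (fun t : Fin L => 1 ≤ (t : ℕ)),
          (1 - a * attnVar L a x t) := by
  refine ⟨differentiable_residMap a, fun x =>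
    ⟨fun t s hts => fderiv_residMap_single_of_lt a x hts, fun t ht => ?_, ?_⟩⟩
  · rw [fderiv_residMap_single_self, attnVar_eq_zero_of_val_eq_zero a x ht, mul_zero, sub_zero]
  · have hlower : (Matrix.of fun t s : Fin L =>
        fderiv ℝ (residMap L a) x (Pi.single s 1) t).IsLowerTriangular :=
      fun t s hst => fderiv_residMap_single_of_lt a x hst
    rw [Matrix.det_of_isLowerTriangular _ hlower]
    simp only [Matrix.of_apply, fderiv_residMap_single_self]
    refine (prod_filter_of_ne fun t _ ht => ?_).symm
    contrapose! ht
    rw [attnVar_eq_zero_of_val_eq_zero a x (by omega), mul_zero, sub_zero]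

/-- The scalar residual map `E` is differentiable on `ℝ^L`; its Jacobian matrix at `x`
(entries `∂e_t/∂x_s = fderiv ℝ E x (Pi.single s 1) t`) vanishes for `s > t`, the first
diagonal entry is `1`, and its determinant equals `∏_{t=2}^L (1 − a·Var_t(x))`
(0-indexed: product over `t` with `1 ≤ (t : ℕ)`). -/
theorem stmt4 (L : ℕ) (hL : 1 ≤ L) (a : ℝ) :
    Differentiable ℝ (residMap L a) ∧
    ∀ x : Fin L → ℝ,
      (∀ t s : Fin L, t < s → fderiv ℝ (residMap L a) x (Pi.single s 1) t = 0) ∧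
      (∀ t : Fin L, (t : ℕ) = 0 → fderiv ℝ (residMap L a) x (Pi.single t 1) t = 1) ∧
      (Matrix.of fun t s : Fin L => fderiv ℝ (residMap L a) x (Pi.single s 1) t).det =
        ∏ t ∈ Finset.univ.filter (fun t : Fin L => 1 ≤ (t : ℕ)),
          (1 - a * attnVar L a x t) :=
  stmt4_general L a

end
end

section
/- With the current position included in the context, for each t with 1 ≤ t ≤ L and each x ∈ (ℝ^d)^L, the map u ↦ u − Σ_{s≤t} β_s(u)·w_s(u), where β_s(u) = exp(uᵀ Aᵀ x_s) / Σ_{r≤t} exp(uᵀ Aᵀ x_r) (the keys x_1, …, x_t being held fixed, so the derivative is taken only through the query and value occurrences of the current token) and w_s(u) = x_s for s < t while w_t(u) = u, is Fréchet differentiable at u = x_t, with derivative the linear map given by the matrix (1 − α^≤_{tt}(x))·I_d − Σ^≤_t(x)·A. -/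
/- Self-inclusive attention (the current position is included in the context, s ≤ t):
α^≤_{ts}(x) = exp(x_tᵀAᵀx_s)/Σ_{r≤t} exp(x_tᵀAᵀx_r), μ^≤_t(x) = Σ_{s≤t} α^≤_{ts}(x) x_s,
Σ^≤_t(x) = Σ_{s≤t} α^≤_{ts}(x) (x_s − μ^≤_t(x))(x_s − μ^≤_t(x))ᵀ. In the differentiated
map, keys x_1, …, x_t are held fixed while the query and value occurrences of the current
token vary: w_s(u) = x_s for s < t and w_t(u) = u. -/

noncomputable section

open Matrix

def alphaLe (d L : ℕ) (A : Matrix (Fin d) (Fin d) ℝ) (x : Fin L → Fin d → ℝ)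
    (t s : Fin L) : ℝ :=
  Real.exp (x t ⬝ᵥ (Aᵀ *ᵥ x s)) / ∑ r ∈ Finset.Iic t, Real.exp (x t ⬝ᵥ (Aᵀ *ᵥ x r))

def muLe (d L : ℕ) (A : Matrix (Fin d) (Fin d) ℝ) (x : Fin L → Fin d → ℝ) (t : Fin L) :
    Fin d → ℝ :=
  ∑ s ∈ Finset.Iic t, alphaLe d L A x t s • x s

def sigmaLe (d L : ℕ) (A : Matrix (Fin d) (Fin d) ℝ) (x : Fin L → Fin d → ℝ) (t : Fin L) :
    Matrix (Fin d) (Fin d) ℝ :=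
  ∑ s ∈ Finset.Iic t,
    alphaLe d L A x t s • Matrix.vecMulVec (x s - muLe d L A x t) (x s - muLe d L A x t)

/-! By the product rule the derivative at `x_t` sends `v` to `v − α_t v − Σ_s (Dβ_s v) x_s`.
The softmax weights have derivative `Dβ_s v = α_s (⟨x_s, A v⟩ − Σ_r α_r ⟨x_r, A v⟩)
= α_s ⟨x_s − μ, A v⟩`; these coefficients sum to zero, so `Σ_s (Dβ_s v) x_s` may be recentred
to `Σ_s α_s ⟨x_s − μ, A v⟩ (x_s − μ) = Σ^≤_t A v`. -/

theorem sum_exp_div_sum_exp {ι : Type*} {S : Finset ι} (hS : S.Nonempty) (z : ι → ℝ) :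
    ∑ s ∈ S, Real.exp (z s) / ∑ r ∈ S, Real.exp (z r) = 1 := by
  rw [← Finset.sum_div]
  exact div_self (Finset.sum_pos (fun r _ => Real.exp_pos _) hS).ne'

theorem hasFDerivAt_exp_div_sum_exp {ι E : Type*} [NormedAddCommGroup E] [NormedSpace ℝ E]
    {S : Finset ι} (hS : S.Nonempty) {f : ι → E → ℝ} {f' : ι → E →L[ℝ] ℝ} {u : E}
    (hf : ∀ r, HasFDerivAt (f r) (f' r) u) (s : ι) :
    HasFDerivAt (fun v => Real.exp (f s v) / ∑ r ∈ S, Real.exp (f r v))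
      ((Real.exp (f s u) / ∑ r ∈ S, Real.exp (f r u)) •
        (f' s - ∑ r ∈ S, (Real.exp (f r u) / ∑ q ∈ S, Real.exp (f q u)) • f' r)) u := by
  set Z := ∑ r ∈ S, Real.exp (f r u)
  have hZ : Z ≠ 0 := (Finset.sum_pos (fun r _ => Real.exp_pos _) hS).ne'
  have hZ_deriv : HasFDerivAt (fun v => ∑ r ∈ S, Real.exp (f r v))
      (∑ r ∈ S, Real.exp (f r u) • f' r) u := HasFDerivAt.fun_sum fun r _ => (hf r).exp
  simp only [div_eq_mul_inv]
  refine ((hf s).exp.fun_mul ((hasDerivAt_inv hZ).comp_hasFDerivAt u hZ_deriv)).congr_fderiv ?_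
  ext v
  simp only [_root_.smul_apply, _root_.sub_apply, _root_.add_apply, _root_.sum_apply,
    smul_eq_mul, Function.comp_apply]
  have hZ_mul_sum : ∑ r ∈ S, Real.exp (f r u) * Z⁻¹ * f' r v =
      Z⁻¹ * ∑ r ∈ S, Real.exp (f r u) * f' r v := by
    rw [Finset.mul_sum]
    exact Finset.sum_congr rfl fun r _ => by ring
  rw [hZ_mul_sum]
  field_simp
  ring

theorem weightedCovariance_mulVec {R n ι : Type*} [CommRing R] [Fintype n] {S : Finset ι}
    {α : ι → R} (hα : ∑ s ∈ S, α s = 1) (y : ι → n → R) (w : n → R) :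
    (∑ s ∈ S, α s • vecMulVec (y s - ∑ r ∈ S, α r • y r) (y s - ∑ r ∈ S, α r • y r)) *ᵥ w =
      ∑ s ∈ S, (α s * (y s ⬝ᵥ w - ∑ r ∈ S, α r * (y r ⬝ᵥ w))) • y s := by
  set μ := ∑ r ∈ S, α r • y r
  have hμ : μ ⬝ᵥ w = ∑ r ∈ S, α r * (y r ⬝ᵥ w) := by
    simp only [μ, sum_dotProduct, smul_dotProduct, smul_eq_mul]
  have hcentered : ∑ s ∈ S, α s * ((y s - μ) ⬝ᵥ w) = 0 := by
    simp only [sub_dotProduct, mul_sub, Finset.sum_sub_distrib, ← Finset.sum_mul, hα, one_mul,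
      hμ, sub_self]
  calc (∑ s ∈ S, α s • vecMulVec (y s - μ) (y s - μ)) *ᵥ w
      = ∑ s ∈ S, (α s * ((y s - μ) ⬝ᵥ w)) • (y s - μ) := by
        simp only [sum_mulVec, smul_mulVec, vecMulVec_mulVec, op_smul_eq_smul, smul_smul]
    _ = ∑ s ∈ S, (α s * ((y s - μ) ⬝ᵥ w)) • y s := by
        simp only [smul_sub, Finset.sum_sub_distrib, ← Finset.sum_smul, hcentered, zero_smul,
          sub_zero]
    _ = _ := by simp only [sub_dotProduct, hμ]

theorem hasFDerivAt_dotProduct_transpose_mulVec {m n : Type*} [Fintype m] [Fintype n]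
    (A : Matrix m n ℝ) (k : m → ℝ) (u : n → ℝ) :
    HasFDerivAt (fun v => v ⬝ᵥ (Aᵀ *ᵥ k))
      (LinearMap.toContinuousLinearMap ((dotProductBilin ℝ ℝ k).comp A.mulVecLin)) u := by
  convert (LinearMap.toContinuousLinearMap ((dotProductBilin ℝ ℝ k).comp A.mulVecLin)).hasFDerivAt
    using 1
  funext v
  simp [dotProduct_mulVec, vecMul_transpose, dotProduct_comm]

theorem stmt17_general (d L : ℕ) (A : Matrix (Fin d) (Fin d) ℝ)
    (x : Fin L → Fin d → ℝ) (t : Fin L) :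
    HasFDerivAt
      (fun u : Fin d → ℝ => u - ∑ s ∈ Finset.Iic t,
        (Real.exp (u ⬝ᵥ (Aᵀ *ᵥ x s)) /
          ∑ r ∈ Finset.Iic t, Real.exp (u ⬝ᵥ (Aᵀ *ᵥ x r))) •
          (if s = t then u else x s))
      (LinearMap.toContinuousLinearMap
        (Matrix.mulVecLin
          ((1 - alphaLe d L A x t t) • (1 : Matrix (Fin d) (Fin d) ℝ) -
            sigmaLe d L A x t * A)))
      (x t) := by
  have hS : (Finset.Iic t).Nonempty := ⟨t, Finset.mem_Iic.mpr le_rfl⟩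
  have hweight := hasFDerivAt_exp_div_sum_exp hS
    (fun r => hasFDerivAt_dotProduct_transpose_mulVec A (x r) (x t))
  have hvalue : ∀ s, HasFDerivAt (fun u : Fin d → ℝ => if s = t then u else x s)
      (if s = t then ContinuousLinearMap.id ℝ _ else 0) (x t) := fun s => by
    split_ifs
    exacts [hasFDerivAt_id _, hasFDerivAt_const _ _]
  refine ((hasFDerivAt_id _).sub
    (HasFDerivAt.fun_sum fun s _ => (hweight s).smul (hvalue s))).congr_fderiv ?_
  refine ContinuousLinearMap.ext fun v => ?_
  have hα : ∀ s, Real.exp (x t ⬝ᵥ (Aᵀ *ᵥ x s)) / ∑ r ∈ Finset.Iic t,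
      Real.exp (x t ⬝ᵥ (Aᵀ *ᵥ x r)) = alphaLe d L A x t s := fun s => rfl
  have hsum : ∑ s ∈ Finset.Iic t, alphaLe d L A x t s = 1 := sum_exp_div_sum_exp hS _
  have hxt : ∀ s, (if s = t then x t else x s) = x s := fun s => by
    split_ifs with h
    exacts [h ▸ rfl, rfl]
  simp only [hα, hxt, sigmaLe, muLe, sub_mulVec, smul_mulVec, one_mulVec, ← mulVec_mulVec,
    weightedCovariance_mulVec hsum, LinearMap.coe_toContinuousLinearMap', LinearMap.coe_comp,
    Function.comp_apply, mulVecLin_apply, dotProductBilin_apply_apply, _root_.sub_apply,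
    _root_.sum_apply, _root_.add_apply, _root_.smul_apply, ContinuousLinearMap.coe_id', id_eq,
    ContinuousLinearMap.smulRight_apply, smul_eq_mul, smul_ite, smul_zero,
    Finset.sum_add_distrib, Finset.sum_ite_eq', Finset.mem_Iic, le_refl, if_true]
  module

/-- With the current token included in the context, the map
`u ↦ u − Σ_{s≤t} β_s(u)·w_s(u)` (with β_s(u) = exp(uᵀAᵀx_s)/Σ_{r≤t} exp(uᵀAᵀx_r),
w_s(u) = x_s for s < t, w_t(u) = u) is Fréchet differentiable at `u = x_t` with
derivative the linear map given by the matrix `(1 − α^≤_{tt}(x))·I_d − Σ^≤_t(x)·A`. -/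
theorem stmt17 (d L : ℕ) (hd : 1 ≤ d) (hL : 1 ≤ L) (A : Matrix (Fin d) (Fin d) ℝ)
    (x : Fin L → Fin d → ℝ) (t : Fin L) :
    HasFDerivAt
      (fun u : Fin d → ℝ => u - ∑ s ∈ Finset.Iic t,
        (Real.exp (u ⬝ᵥ (Aᵀ *ᵥ x s)) /
          ∑ r ∈ Finset.Iic t, Real.exp (u ⬝ᵥ (Aᵀ *ᵥ x r))) •
          (if s = t then u else x s))
      (LinearMap.toContinuousLinearMap
        (Matrix.mulVecLin
          ((1 - alphaLe d L A x t t) • (1 : Matrix (Fin d) (Fin d) ℝ) -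
            sigmaLe d L A x t * A)))
      (x t) :=
  stmt17_general d L A x t

end
end
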